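/- arXiv:2009.12309 — 2 statements merged into one kernel-verified Lean document; each statement's English description precedes it below -/
import Mathlib

section
/- If G is a biconnected single-source level graph, then the graph G' obtained by adding an apex vertex t above the top level, connecting t to all vertices on the top level and adding the edge (s,t), is also biconnected and single-source. -/
open scoped Classical

/-- A directed graph on vertex type `V`, given by its edge relation. -/
structure DirGraph (V : Type) where
  E : V → V → Prop

namespace DirGraph
variable {V : Type}

/-- Underlying undirected adjacency. -/
def Adj (G : DirGraph V) (u v : V) : Prop := G.E u v ∨ G.E v u

def IsSource (G : DirGraph V) (s : V) : Prop := ∀ u, ¬ G.E u s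
def IsSink (G : DirGraph V) (t : V) : Prop := ∀ u, ¬ G.E t u
def UniqueSource (G : DirGraph V) (s : V) : Prop := G.IsSource s ∧ ∀ v, G.IsSource v → v = s
def UniqueSink (G : DirGraph V) (t : V) : Prop := G.IsSink t ∧ ∀ v, G.IsSink v → v = t
def Acyclic (G : DirGraph V) : Prop := ∀ v, ¬ Relation.TransGen G.E v v
/-- An st-graph: acyclic with a unique source `s` and a unique sink `t`. -/
def IsStGraph (G : DirGraph V) (s t : V) : Prop := G.Acyclic ∧ G.UniqueSource s ∧ G.UniqueSink t
/-- Directed reachability. -/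
def Reaches (G : DirGraph V) : V → V → Prop := Relation.ReflTransGen G.E

/-- Underlying simple graph. -/
def toSimple (G : DirGraph V) : SimpleGraph V where
  Adj a b := a ≠ b ∧ G.Adj a b
  symm := ⟨fun _ _ h => ⟨h.1.symm, Or.symm h.2⟩⟩
  loopless := ⟨fun _ h => h.1 rfl⟩

end DirGraph

/-- A graph is biconnected on a vertex set `S` if deleting any one vertex of `S`
leaves the graph induced on the rest of `S` connected. -/
def BiconnectedOn {V : Type} (H : SimpleGraph V) (S : Set V) : Prop :=
  ∀ x ∈ S, (H.induce (S \ {x})).Connected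

/-- A digraph is biconnected if its underlying undirected graph is 2-connected. -/
def DirGraph.Biconnected {V : Type} (G : DirGraph V) : Prop :=
  BiconnectedOn G.toSimple Set.univ

/-- A level graph: a digraph together with a level assignment that strictly
increases along every directed edge. -/
structure LevelGraph (V : Type) extends DirGraph V where
  lev : V → ℤ
  mono : ∀ u v, E u v → lev u < lev v

/-- A level-planar drawing: every vertex `v` is placed at the point `(x v, lev v)`,
every edge `(u,v)` is drawn as a continuous `y`-monotone curve (the graph of a
function `x = curve y` on `[lev u, lev v]`) joining its endpoints, distinct vertices
on a common level have distinct `x`-coordinates, and two distinct edge curves meet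
only at points corresponding to common endpoints. -/
structure LevelPlanarDrawing {V : Type} (G : LevelGraph V) where
  x : V → ℝ
  curve : ∀ u v, G.E u v → ℝ → ℝ
  curve_cont : ∀ u v (h : G.E u v),
    ContinuousOn (curve u v h) (Set.Icc (G.lev u : ℝ) (G.lev v : ℝ))
  curve_src : ∀ u v (h : G.E u v), curve u v h (G.lev u : ℝ) = x u
  curve_tgt : ∀ u v (h : G.E u v), curve u v h (G.lev v : ℝ) = x v
  inj_level : ∀ u v, u ≠ v → G.lev u = G.lev v → x u ≠ x v
  nocross : ∀ u v (h : G.E u v) u' v' (h' : G.E u' v'), (u, v) ≠ (u', v') →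
    ∀ y : ℝ, y ∈ Set.Icc (G.lev u : ℝ) (G.lev v : ℝ) →
      y ∈ Set.Icc (G.lev u' : ℝ) (G.lev v' : ℝ) →
      curve u v h y = curve u' v' h' y →
      ∃ w : V, (w = u ∨ w = v) ∧ (w = u' ∨ w = v') ∧ y = (G.lev w : ℝ)

/-- `G` is level planar if it admits a level-planar drawing. -/
def LevelGraph.LevelPlanar {V : Type} (G : LevelGraph V) : Prop :=
  Nonempty (LevelPlanarDrawing G)

/-- A (combinatorial) planar embedding of (the underlying undirected graph of) `G`:
a rotation system (the cyclic list `rot v` of neighbours around each vertex `v`,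
recorded as a list up to cyclic rotation) together with an abstract system of faces,
an outer face, and vertex/edge–face incidences. -/
structure PlanarEmbedding {V : Type} (G : DirGraph V) where
  rot : V → List V
  mem_rot : ∀ v w, w ∈ rot v ↔ G.Adj v w
  nodup_rot : ∀ v, (rot v).Nodup
  Face : Type
  outer : Face
  incV : V → Face → Prop
  incE : V → V → Face → Prop
  incE_symm : ∀ u v f, incE u v f → incE v u f
  incE_incV : ∀ u v f, incE u v f → incV u f ∧ incV v f
  incE_adj : ∀ u v f, incE u v f → G.Adj u v
  exists_face : ∀ u v, G.Adj u v → ∃ f, incE u v f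

/-- `a` is an apex of the face `f`: a vertex of maximum level incident to `f`. -/
def PlanarEmbedding.IsApex {V : Type} {G : LevelGraph V} (Γ : PlanarEmbedding G.toDirGraph)
    (a : V) (f : Γ.Face) : Prop :=
  Γ.incV a f ∧ ∀ w, Γ.incV w f → G.lev w ≤ G.lev a

/-- The level-planar drawing `D` realizes the combinatorial embedding `Γ`:
around every vertex `v` the rotation splits (up to cyclic rotation) into the block
of incoming edges ordered from left to right (as given by comparison of the curves
just below `v`) followed by the block of outgoing edges ordered from right to left
(comparison just above `v`). -/
def LevelPlanarDrawing.Realizes {V : Type} {G : LevelGraph V} (D : LevelPlanarDrawing G)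
    (Γ : PlanarEmbedding G.toDirGraph) : Prop :=
  ∀ v : V, ∃ lin lout : List V,
    (Γ.rot v).IsRotated (lin ++ lout) ∧
    (∀ u ∈ lin, G.E u v) ∧ (∀ u ∈ lout, G.E v u) ∧
    lin.Pairwise (fun a b => ∀ (ha : G.E a v) (hb : G.E b v),
      ∀ᶠ y in nhdsWithin (G.lev v : ℝ) (Set.Iio (G.lev v : ℝ)),
        D.curve a v ha y < D.curve b v hb y) ∧
    lout.Pairwise (fun a b => ∀ (ha : G.E v a) (hb : G.E v b),
      ∀ᶠ y in nhdsWithin (G.lev v : ℝ) (Set.Ioi (G.lev v : ℝ)),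
        D.curve v b hb y < D.curve v a ha y)

/-- A combinatorial embedding is level planar if some level-planar drawing realizes it. -/
def PlanarEmbedding.IsLevelPlanar {V : Type} {G : LevelGraph V}
    (Γ : PlanarEmbedding G.toDirGraph) : Prop :=
  ∃ D : LevelPlanarDrawing G, D.Realizes Γ

/-- The embedding `Γ'` of a supergraph `G'` of `G` (on the same vertex set) extends the
embedding `Γ` of `G`: deleting the new edges from every rotation yields `Γ`. -/
def RestrictsTo {V : Type} {G' G : DirGraph V}
    (Γ' : PlanarEmbedding G') (Γ : PlanarEmbedding G) : Prop :=
  ∀ v, ((Γ'.rot v).filter (fun u => decide (G.Adj v u))).IsRotated (Γ.rot v)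

/-- The graph `G'` obtained from a `k`-level graph `G` with source `s` by adding a new
apex vertex `t` (here `none`) on level `k+1`, edges from every vertex on level `k` to `t`,
and the edge `(s,t)`. -/
def extendApex {V : Type} (G : LevelGraph V) (k : ℤ) (s : V) (hk : ∀ v, G.lev v ≤ k) :
    LevelGraph (Option V) where
  E a b := (∃ u w, a = some u ∧ b = some w ∧ G.E u w) ∨
           (∃ u, a = some u ∧ b = none ∧ (G.lev u = k ∨ u = s))
  lev a := Option.casesOn a (k + 1) G.lev
  mono := by
    rintro a b (⟨u, w, rfl, rfl, h⟩ | ⟨u, rfl, rfl, h⟩)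
    · exact G.mono u w h
    · show G.lev u < k + 1
      have := hk u; omega

/-
Deleting the apex `t` leaves a copy of `G`, which is connected: for a vertex `v ≠ s`, `G - v` is
connected and `v` is attached to it by an edge from an in-neighbour. Deleting a vertex `v` of `G`
leaves a connected copy of `G - v` together with `t`, and `t` keeps a neighbour there: `s` if
`v ≠ s`, and otherwise a top-level vertex, which differs from `s` because a source on the top
level would be isolated. Finally `s` stays the only source,
since `t` receives the edge `(s,t)` and no new edge enters a vertex of `G`.
-/

open SimpleGraph

theorem SimpleGraph.Connected.of_hom_of_forall_adj_range {V W : Type*} {G : SimpleGraph V}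
    {H : SimpleGraph W} (hG : G.Connected) (f : G →g H)
    (hf : ∀ y, y ∈ Set.range f ∨ ∃ x, H.Adj y (f x)) : H.Connected := by
  have hreach : ∀ y, ∃ x, H.Reachable y (f x) := fun y => by
    rcases hf y with ⟨x, rfl⟩ | ⟨x, hx⟩
    exacts [⟨x, .rfl⟩, ⟨x, hx.reachable⟩]
  have := hG.nonempty.map f
  refine ⟨fun y z => ?_⟩
  obtain ⟨a, hya⟩ := hreach y
  obtain ⟨b, hzb⟩ := hreach z
  exact hya.trans (((hG a b).map f).trans hzb.symm)

theorem SimpleGraph.connected_of_connected_induce_diff {V : Type*} {G : SimpleGraph V} {x u : V}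
    (hx : (G.induce (Set.univ \ {x})).Connected) (hxu : G.Adj x u) : G.Connected :=
  hx.of_hom_of_forall_adj_range (Embedding.induce _).toHom fun y => by
    by_cases hy : y = x
    · subst hy
      exact Or.inr ⟨⟨u, by simpa using hxu.ne'⟩, hxu⟩
    · exact Or.inl ⟨⟨y, by simpa using hy⟩, rfl⟩

namespace DirGraph
variable {V : Type} {G : DirGraph V}

theorem UniqueSource.exists_E_of_ne {s v : V} (hs : G.UniqueSource s) (hv : v ≠ s) :
    ∃ u, G.E u v := by
  by_contra! h
  exact hv (hs.2 v h)

theorem Biconnected.exists_ne (hbic : G.Biconnected) (x : V) : ∃ y, y ≠ x := by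
  obtain ⟨⟨y, hy⟩⟩ := (hbic x trivial).nonempty
  exact ⟨y, by simpa using hy⟩

end DirGraph

namespace LevelGraph
variable {V : Type} (G : LevelGraph V) {s : V}

theorem toSimple_adj_of_E {u v : V} (h : G.E u v) : G.toSimple.Adj u v :=
  ⟨fun huv => by have := G.mono u v h; subst huv; omega, Or.inl h⟩

theorem toSimple_connected (hs : G.UniqueSource s) (hbic : G.Biconnected) :
    G.toSimple.Connected := by
  obtain ⟨v, hvs⟩ := hbic.exists_ne s
  obtain ⟨u, huv⟩ := hs.exists_E_of_ne hvs
  exact connected_of_connected_induce_diff (hbic v trivial) (G.toSimple_adj_of_E huv).symm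

theorem lev_lt_of_isSource_of_adj {k : ℤ} (hk : ∀ v, G.lev v ≤ k) (hs : G.IsSource s) {u : V}
    (h : G.toSimple.Adj s u) : G.lev s < k := by
  rcases h.2 with h | h
  · have := G.mono _ _ h
    have := hk u
    omega
  · exact absurd h (hs u)

theorem exists_lev_eq_ne_source {k : ℤ} (hk : ∀ v, G.lev v ≤ k) (htop : ∃ v, G.lev v = k)
    (hs : G.UniqueSource s) (hbic : G.Biconnected) : ∃ w, G.lev w = k ∧ w ≠ s := by
  obtain ⟨w, hw⟩ := htop
  refine ⟨w, hw, ?_⟩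
  rintro rfl
  obtain ⟨v, hv⟩ := hbic.exists_ne w
  have : Nontrivial V := nontrivial_of_ne v w hv
  obtain ⟨u, hwu⟩ := (G.toSimple_connected hs hbic).preconnected.exists_adj_of_nontrivial w
  have := G.lev_lt_of_isSource_of_adj hk hs.1 hwu
  omega

end LevelGraph

section extendApex
variable {V : Type} (G : LevelGraph V) (k : ℤ) (s : V) (hk : ∀ v, G.lev v ≤ k)

theorem extendApex_adj_some {a b : V} (h : G.toSimple.Adj a b) :
    (extendApex G k s hk).toSimple.Adj (some a) (some b) := by
  refine ⟨fun hab => h.1 (Option.some.inj hab), ?_⟩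
  rcases h.2 with h | h
  exacts [Or.inl (Or.inl ⟨a, b, rfl, rfl, h⟩), Or.inr (Or.inl ⟨b, a, rfl, rfl, h⟩)]

theorem extendApex_adj_none {u : V} (hu : G.lev u = k ∨ u = s) :
    (extendApex G k s hk).toSimple.Adj (some u) none :=
  ⟨Option.some_ne_none u, Or.inl (Or.inr ⟨u, rfl, rfl, hu⟩)⟩

def extendApexSomeHom : G.toSimple →g (extendApex G k s hk).toSimple :=
  ⟨some, extendApex_adj_some G k s hk⟩

theorem extendApex_uniqueSource (hs : G.UniqueSource s) :
    (extendApex G k s hk).UniqueSource (some s) := by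
  constructor
  · rintro _ (⟨a, b, -, hb, h⟩ | ⟨a, -, hb, -⟩)
    · cases Option.some.inj hb
      exact hs.1 a h
    · cases hb
  · rintro (_ | v) hv
    · exact absurd (Or.inr ⟨s, rfl, rfl, Or.inr rfl⟩) (hv (some s))
    · by_contra hvs
      obtain ⟨u, hu⟩ := hs.exists_E_of_ne fun h => hvs (congrArg some h)
      exact hv (some u) (Or.inl ⟨u, v, rfl, rfl, hu⟩)

theorem extendApex_connected_induce_diff_none (hG : G.toSimple.Connected) :
    ((extendApex G k s hk).toSimple.induce (Set.univ \ {none})).Connected := by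
  refine hG.map ⟨fun u => ⟨some u, by simp⟩, extendApex_adj_some G k s hk⟩ ?_
  rintro ⟨_ | u, hu⟩
  · simp at hu
  · exact ⟨u, rfl⟩

theorem extendApex_connected_induce_diff_some {u v : V}
    (hv : (G.toSimple.induce (Set.univ \ {v})).Connected) (huv : u ≠ v)
    (hu : G.lev u = k ∨ u = s) :
    ((extendApex G k s hk).toSimple.induce (Set.univ \ {some v})).Connected := by
  refine hv.of_hom_of_forall_adj_range
    (induceHom (extendApexSomeHom G k s hk) fun x hx => by simpa [extendApexSomeHom] using hx) ?_
  rintro ⟨_ | w, hw⟩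
  · exact Or.inr ⟨⟨u, by simpa using huv⟩, (extendApex_adj_none G k s hk hu).symm⟩
  · exact Or.inl ⟨⟨w, by simpa using hw⟩, rfl⟩

theorem extendApex_biconnected (htop : ∃ v, G.lev v = k) (hs : G.UniqueSource s)
    (hbic : G.Biconnected) : (extendApex G k s hk).Biconnected := by
  rintro (_ | v) -
  · exact extendApex_connected_induce_diff_none G k s hk (G.toSimple_connected hs hbic)
  · obtain ⟨u, huv, hu⟩ : ∃ u, u ≠ v ∧ (G.lev u = k ∨ u = s) := by
      by_cases hvs : v = s
      · obtain ⟨w, hw, hws⟩ := G.exists_lev_eq_ne_source hk htop hs hbic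
        exact ⟨w, hvs ▸ hws, Or.inl hw⟩
      · exact ⟨s, Ne.symm hvs, Or.inr rfl⟩
    exact extendApex_connected_induce_diff_some G k s hk (hbic v trivial) huv hu

end extendApex

/-- If `G` is a biconnected single-source level graph (on levels up to
`k`, with some vertex on the top level `k`), then the graph `G'` obtained by adding an
apex `t` above the top level, connecting all top-level vertices to `t` and adding the
edge `(s,t)`, is again biconnected and single-source (with source `s`). -/
theorem statement_4 {V : Type} (G : LevelGraph V) (k : ℤ) (s : V)
    (hk : ∀ v, G.lev v ≤ k) (htop : ∃ v, G.lev v = k)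
    (hs : G.toDirGraph.UniqueSource s)
    (hbic : G.toDirGraph.Biconnected) :
    (extendApex G k s hk).toDirGraph.Biconnected ∧
      (extendApex G k s hk).toDirGraph.UniqueSource (some s) :=
  ⟨extendApex_biconnected G k s hk htop hs hbic, extendApex_uniqueSource G k s hk hs⟩
end

section
/- In any directed acyclic graph with a single source, every vertex that is not the source is reachable from the source; in particular, for any two vertices u and v there exists a vertex w together with two directed paths from w to u and from w to v that are vertex-disjoint except at w. -/
open scoped Classical

/-- `l` is a directed path in `G` from `w` to `u` (a nonempty list of vertices starting
at `w`, ending at `u`, consecutive vertices joined by directed edges). -/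
def DipathFrom {V : Type} (G : DirGraph V) (w u : V) (l : List V) : Prop :=
  l.Chain' G.E ∧ l.head? = some w ∧ l.getLast? = some u

/-!
Every vertex `v ≠ s` has an in-neighbour, since `s` is the only source; acyclicity on a finite
vertex set makes the edge relation well-founded, so walking backwards from `v` must end at `s`.

For the disjoint paths, induct along a path from `s` to `u`, keeping a vertex `w` and paths
`w ⇝ u'`, `w ⇝ v` meeting only in `w`. When `u'` is extended by an edge `u' → u`, either `u`
avoids the path to `v` and we append it, or `u` lies on that path and we restart at `w = u`
with the trivial path to `u` and the tail of the path to `v`.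
-/

namespace DirGraph

variable {V : Type} {G : DirGraph V}

theorem Acyclic.wellFounded [Finite V] (h : G.Acyclic) : WellFounded G.E :=
  have : Std.Irrefl (Relation.TransGen G.E) := ⟨h⟩
  have : IsTrans V (Relation.TransGen G.E) := ⟨fun _ _ _ => Relation.TransGen.trans⟩
  Subrelation.wf Relation.TransGen.single (Finite.wellFounded_of_trans_of_irrefl _)

theorem reaches_of_forall_isSource_eq (hwf : WellFounded G.E) {s : V}
    (hs : ∀ v, G.IsSource v → v = s) (v : V) : G.Reaches s v := by
  induction v using hwf.induction with
  | _ v ih =>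
    by_cases hv : G.IsSource v
    · rw [hs v hv]
      exact Relation.ReflTransGen.refl
    · obtain ⟨u, hu⟩ := not_forall_not.mp hv
      exact (ih u hu).tail hu

end DirGraph

section Dipath

variable {V : Type} {G : DirGraph V}

theorem DipathFrom.singleton (w : V) : DipathFrom G w w [w] :=
  ⟨List.isChain_singleton w, rfl, rfl⟩

theorem DipathFrom.concat {w u c : V} {l : List V} (h : DipathFrom G w u l) (e : G.E u c) :
    DipathFrom G w c (l ++ [c]) := by
  obtain ⟨hchain, hhead, hlast⟩ := h
  have hne : l ≠ [] := by rintro rfl; simp at hhead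
  refine ⟨List.isChain_append.mpr ⟨hchain, List.isChain_singleton c, ?_⟩, ?_, by simp⟩
  · intro x hx y hy
    simp_all
  · rwa [List.head?_append_of_ne_nil _ hne]

theorem DirGraph.Reaches.exists_dipathFrom {w u : V} (h : G.Reaches w u) :
    ∃ l, DipathFrom G w u l := by
  obtain ⟨l, hchain, hlast⟩ := List.exists_isChain_cons_of_relationReflTransGen h
  exact ⟨w :: l, hchain, rfl, by simp [← hlast, List.getLast?_eq_getLast_of_ne_nil]⟩

theorem DipathFrom.reaches_of_mem {w u x : V} {l : List V} (h : DipathFrom G w u l)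
    (hx : x ∈ l) : G.Reaches x u := by
  obtain ⟨pre, post, rfl⟩ := List.mem_iff_append.mp hx
  refine List.relationReflTransGen_of_exists_isChain_cons post
    (h.1.suffix (List.suffix_append pre _)) ?_
  simpa [List.getLast?_eq_getLast_of_ne_nil] using h.2.2

theorem exists_disjoint_dipathFrom_of_reaches {u v : V} (h : G.Reaches u v) :
    ∃ (w : V) (p q : List V),
      DipathFrom G w u p ∧ DipathFrom G w v q ∧ ∀ x, x ∈ p → x ∈ q → x = w := by
  obtain ⟨q, hq⟩ := h.exists_dipathFrom
  exact ⟨u, [u], q, .singleton u, hq, fun x hx _ => List.mem_singleton.mp hx⟩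

theorem exists_disjoint_dipathFrom_of_reaches_of_reaches {s u v : V}
    (hu : G.Reaches s u) (hv : G.Reaches s v) :
    ∃ (w : V) (p q : List V),
      DipathFrom G w u p ∧ DipathFrom G w v q ∧ ∀ x, x ∈ p → x ∈ q → x = w := by
  induction hu with
  | refl => exact exists_disjoint_dipathFrom_of_reaches hv
  | @tail u' u _ e ih =>
    obtain ⟨w, p, q, hp, hq, hdisj⟩ := ih
    by_cases hmem : u ∈ q
    · exact exists_disjoint_dipathFrom_of_reaches (hq.reaches_of_mem hmem)
    · refine ⟨w, p ++ [u], q, hp.concat e, hq, fun x hx hxq => ?_⟩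
      rcases List.mem_append.mp hx with hxp | hxu
      · exact hdisj x hxp hxq
      · rw [List.mem_singleton.mp hxu] at hxq
        exact absurd hxq hmem

end Dipath

/-- In a (finite) directed acyclic graph with a single source `s`,
every vertex is reachable from `s`; in particular, for any two vertices `u`, `v` there
is a vertex `w` and directed paths from `w` to `u` and from `w` to `v` that share only
the vertex `w`. -/
theorem statement_7 {V : Type} [Finite V] (G : DirGraph V) (s : V)
    (hacyc : G.Acyclic) (hs : G.UniqueSource s) :
    (∀ v, G.Reaches s v) ∧
    ∀ u v : V, ∃ (w : V) (p q : List V),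
      DipathFrom G w u p ∧ DipathFrom G w v q ∧
      ∀ x, x ∈ p → x ∈ q → x = w := by
  have hreach := DirGraph.reaches_of_forall_isSource_eq hacyc.wellFounded hs.2
  exact ⟨hreach, fun u v =>
    exists_disjoint_dipathFrom_of_reaches_of_reaches (hreach u) (hreach v)⟩
end
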